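/- Let (L, v) be a complete non-archimedean valued field and let τ : L → L be a ring homomorphism satisfying v(τ(x)) = q·v(x) for all x ∈ L, where q > 1. Let G ∈ L with v(G − 1) > 0. Then the infinite product β = ∏_{i≥0} τ^i(G) converges in L to a unit, and α := β^{-1} satisfies τ(α) = G·α. -/

import Mathlib

open Filter Topology Finset

/-!
The partial products `Pₙ = ∏_{i<n} τ^i(G)` satisfy `Pₙ₊₁ = τ(Pₙ)·G`. Since
`‖τ^i(G) - 1‖ = ‖G - 1‖^(q^i)` tends to zero and every factor lies in the closed ball of radius
`‖G - 1‖ < 1` around `1`, which is closed under multiplication in an ultrametric field, the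
partial products form a Cauchy sequence whose limit `β` stays in that ball, hence is nonzero.
The map `τ` is continuous, so passing to the limit gives `β = τ(β)·G`, i.e. `τ(β⁻¹) = G·β⁻¹`.
-/

section Ultrametric

variable {K : Type*} [NormedField K] [IsUltrametricDist K]

lemma norm_le_one_of_norm_sub_one_le_one {x : K} (hx : ‖x - 1‖ ≤ 1) : ‖x‖ ≤ 1 := by
  simpa using (IsUltrametricDist.norm_add_le_max (x - 1) (1 : K)).trans (max_le hx norm_one.le)

lemma norm_mul_sub_one_le {x y : K} {r : ℝ} (hr : r ≤ 1) (hx : ‖x - 1‖ ≤ r)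
    (hy : ‖y - 1‖ ≤ r) : ‖x * y - 1‖ ≤ r := by
  have hx1 : ‖x‖ ≤ 1 := norm_le_one_of_norm_sub_one_le_one (hx.trans hr)
  calc ‖x * y - 1‖ = ‖x * (y - 1) + (x - 1)‖ := by ring_nf
    _ ≤ max (‖x‖ * ‖y - 1‖) ‖x - 1‖ := by
        simpa only [norm_mul] using IsUltrametricDist.norm_add_le_max (x * (y - 1)) (x - 1)
    _ ≤ r := max_le ((mul_le_of_le_one_left (norm_nonneg _) hx1).trans hy) hx

lemma norm_prod_sub_one_le {ι : Type*} (s : Finset ι) {g : ι → K} {r : ℝ} (hr₀ : 0 ≤ r)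
    (hr : r ≤ 1) (hg : ∀ i ∈ s, ‖g i - 1‖ ≤ r) : ‖∏ i ∈ s, g i - 1‖ ≤ r :=
  Finset.prod_induction g (fun x : K ↦ ‖x - 1‖ ≤ r) (fun _ _ ↦ norm_mul_sub_one_le hr)
    (by simpa using hr₀) hg

lemma exists_tendsto_prod_range [CompleteSpace K] {g : ℕ → K} {r : ℝ} (hr : r < 1)
    (hg : ∀ i, ‖g i - 1‖ ≤ r) (hlim : Tendsto g atTop (𝓝 1)) :
    ∃ b : K, Tendsto (fun n ↦ ∏ i ∈ range n, g i) atTop (𝓝 b) ∧ ‖b - 1‖ ≤ r := by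
  have hr₀ : 0 ≤ r := (norm_nonneg _).trans (hg 0)
  have hP n : ‖∏ i ∈ range n, g i - 1‖ ≤ r :=
    norm_prod_sub_one_le _ hr₀ hr.le fun i _ ↦ hg i
  have hstep : Tendsto (fun n ↦ ∏ i ∈ range (n + 1), g i - ∏ i ∈ range n, g i) atTop (𝓝 0) := by
    refine squeeze_zero_norm (fun n ↦ ?_)
      (tendsto_zero_iff_norm_tendsto_zero.1 (tendsto_sub_nhds_zero_iff.2 hlim))
    rw [prod_range_succ, ← mul_sub_one, norm_mul]
    exact mul_le_of_le_one_left (norm_nonneg _)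
      (norm_le_one_of_norm_sub_one_le_one ((hP n).trans hr.le))
  have hcauchy : CauchySeq (fun n ↦ ∏ i ∈ range n, g i) :=
    NonarchimedeanAddGroup.cauchySeq_of_tendsto_sub_nhds_zero hstep
  obtain ⟨b, hb⟩ := cauchySeq_tendsto_of_complete hcauchy
  exact ⟨b, hb, le_of_tendsto ((hb.sub_const 1).norm) (Eventually.of_forall hP)⟩

end Ultrametric

lemma norm_iterate_eq_rpow {E : Type*} [SeminormedAddGroup E] {f : E → E} {q : ℝ}
    (hf : ∀ x, ‖f x‖ = ‖x‖ ^ q) (n : ℕ) (x : E) : ‖f^[n] x‖ = ‖x‖ ^ (q ^ n) := by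
  induction n with
  | zero => simp
  | succ n ih =>
    rw [Function.iterate_succ_apply', hf, ih, ← Real.rpow_mul (norm_nonneg x), pow_succ]

lemma continuous_of_norm_map_eq_rpow {E F 𝓕 : Type*} [SeminormedAddCommGroup E]
    [SeminormedAddCommGroup F] [FunLike 𝓕 E F] [AddMonoidHomClass 𝓕 E F] (f : 𝓕) {q : ℝ}
    (hq : 0 < q) (hf : ∀ x, ‖f x‖ = ‖x‖ ^ q) : Continuous f := by
  refine continuous_of_tendsto_nhds_zero f (tendsto_zero_iff_norm_tendsto_zero.2 ?_)
  simp_rw [hf]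
  simpa [Real.zero_rpow hq.ne'] using
    (tendsto_norm_zero (E := E)).rpow_const (Or.inr hq.le)

lemma prod_range_succ_iterate {M 𝓕 : Type*} [CommMonoid M] [FunLike 𝓕 M M]
    [MonoidHomClass 𝓕 M M] (f : 𝓕) (x : M) (n : ℕ) :
    ∏ i ∈ range (n + 1), (⇑f)^[i] x = f (∏ i ∈ range n, (⇑f)^[i] x) * x := by
  simp [prod_range_succ', map_prod, Function.iterate_succ_apply']

section NormPowerHom

variable {L : Type*} [NormedField L] {q : ℝ} {τ : L →+* L} (hτ : ∀ x : L, ‖τ x‖ = ‖x‖ ^ q)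
include hτ

lemma norm_iterate_sub_one (G : L) (n : ℕ) : ‖(⇑τ)^[n] G - 1‖ = ‖G - 1‖ ^ (q ^ n) := by
  rw [← norm_iterate_eq_rpow hτ, ← RingHom.coe_pow, map_sub, map_one]

lemma tendsto_iterate_nhds_one (hq : 1 < q) {G : L} (hG : ‖G - 1‖ < 1) :
    Tendsto (fun n ↦ (⇑τ)^[n] G) atTop (𝓝 1) := by
  rw [← tendsto_sub_nhds_zero_iff, tendsto_zero_iff_norm_tendsto_zero]
  simp_rw [norm_iterate_sub_one hτ]
  exact (tendsto_rpow_atTop_of_base_lt_one _ (by linarith [norm_nonneg (G - 1)]) hG).comp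
    (tendsto_pow_atTop_atTop_of_one_lt hq)

end NormPowerHom

/-- Let `(L, ‖·‖)` be a complete non-archimedean valued field and
`τ : L → L` a ring homomorphism with `v(τ x) = q·v(x)` (multiplicatively:
`‖τ x‖ = ‖x‖^q`) for a fixed real `q > 1`. If `G ∈ L` satisfies `v(G − 1) > 0`
(i.e. `‖G − 1‖ < 1`), then the infinite product `β = ∏_{i≥0} τ^i(G)` converges
in `L` to a unit, and `α := β⁻¹` satisfies `τ(α) = G·α`. -/
theorem stmt5 {L : Type*} [NormedField L] [CompleteSpace L]
    (hultra : ∀ x y : L, ‖x + y‖ ≤ max ‖x‖ ‖y‖)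
    (q : ℝ) (hq : 1 < q)
    (τ : L →+* L) (hτ : ∀ x : L, ‖τ x‖ = ‖x‖ ^ q)
    (G : L) (hG : ‖G - 1‖ < 1) :
    ∃ β : Lˣ,
      Tendsto (fun n : ℕ => ∏ i ∈ Finset.range n, (⇑τ)^[i] G) atTop (nhds (β : L)) ∧
        τ ((β : L)⁻¹) = G * (β : L)⁻¹ := by
  have := IsUltrametricDist.isUltrametricDist_of_forall_norm_add_le_max_norm hultra
  have hfactor n : ‖(⇑τ)^[n] G - 1‖ ≤ ‖G - 1‖ := by
    rw [norm_iterate_sub_one hτ]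
    exact Real.rpow_le_self_of_le_one (norm_nonneg _) hG.le (one_le_pow₀ hq.le)
  obtain ⟨b, hPb, hb⟩ := exists_tendsto_prod_range hG hfactor (tendsto_iterate_nhds_one hτ hq hG)
  have hb₀ : b ≠ 0 := by
    rintro rfl
    rw [zero_sub, norm_neg, norm_one] at hb
    linarith
  have hfix : τ b * G = b := by
    have hτc := continuous_of_norm_map_eq_rpow τ (by linarith) hτ
    refine tendsto_nhds_unique ?_ (hPb.comp (tendsto_add_atTop_nat 1))
    simpa only [Function.comp_def, prod_range_succ_iterate] using
      ((hτc.tendsto b).comp hPb).mul_const G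
  have hG₀ : G ≠ 0 := right_ne_zero_of_mul (hfix ▸ hb₀)
  refine ⟨Units.mk0 b hb₀, hPb, ?_⟩
  rw [Units.val_mk0, map_inv₀]
  conv_rhs => rw [← hfix, mul_inv_rev, mul_inv_cancel_left₀ hG₀]
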